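/- Let n < m and let Z(n,m) : ℝⁿ → ℝᵐ be the wrinkled-embedding model Z(y,z) = (y, z³ + 3(|y|² − 1)z, ∫₀ᶻ (s² + |y|² − 1)² ds, 0, …, 0). The (total) derivative of Z at a point (y,z) is an injective linear map ℝⁿ → ℝᵐ if and only if |y|² + z² ≠ 1; that is, the singular set of Z(n,m) is exactly the unit sphere S^{n−1} = {(y,z) : |y|² + z² = 1} ⊂ ℝⁿ. -/

import Mathlib

/-! `Z` has the shape `(y, z) ↦ (y, g (y, z))`, so its differential is injective exactly when the
partial derivative `∂g/∂z` is nonzero. By the fundamental theorem of calculus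
`∂g/∂z = (3 (z² + |y|² − 1), (z² + |y|² − 1)², 0)`, which vanishes exactly on the unit sphere.
Joint differentiability of `g` follows by evaluating the integral in closed form. -/

/-- The wrinkled-embedding model `Z(n,m) : ℝⁿ → ℝᵐ`,
`Z(y,z) = (y, z³ + 3(|y|² − 1)z, ∫₀ᶻ (s² + |y|² − 1)² ds, 0, …, 0)`,
where `ℝⁿ = ℝ^{n−1} × ℝ` (so `k = n−1`) and the `m − n − 1` trailing zeros are
collected in a Euclidean factor (so `l = m − n − 1`). -/
noncomputable def Zmap (k l : ℕ) (p : EuclideanSpace ℝ (Fin k) × ℝ) :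
    EuclideanSpace ℝ (Fin k) × ℝ × ℝ × EuclideanSpace ℝ (Fin l) :=
  (p.1, p.2^3 + 3*(‖p.1‖^2 - 1)*p.2,
    ∫ s in (0:ℝ)..p.2, (s^2 + ‖p.1‖^2 - 1)^2, 0)

open ContinuousLinearMap

section Graph

variable {𝕜 E F : Type*} [NontriviallyNormedField 𝕜] [NormedAddCommGroup E] [NormedSpace 𝕜 E]
  [NormedAddCommGroup F] [NormedSpace 𝕜 F]

theorem ContinuousLinearMap.injective_fst_prod_iff (L : E × 𝕜 →L[𝕜] F) :
    Function.Injective ((fst 𝕜 E 𝕜).prod L) ↔ L (0, 1) ≠ 0 := by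
  rw [injective_iff_map_eq_zero]
  constructor
  · intro h hL
    simpa using h (0, 1) (by simp [hL])
  · rintro hL ⟨v, t⟩ hvt
    simp only [prod_apply, coe_fst', Prod.mk_eq_zero] at hvt
    obtain ⟨rfl, hv⟩ := hvt
    rw [show ((0 : E), t) = t • ((0 : E), (1 : 𝕜)) by simp, map_smul, smul_eq_zero] at hv
    simp [hv.resolve_right hL]

theorem injective_fderiv_graph_iff {g : E × 𝕜 → F} {p : E × 𝕜} {g' : F}
    (hg : DifferentiableAt 𝕜 g p) (hg' : HasDerivAt (fun t => g (p.1, t)) g' p.2) :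
    Function.Injective (fderiv 𝕜 (fun q => (q.1, g q)) p) ↔ g' ≠ 0 := by
  have hslice : HasDerivAt (fun t => g (p.1, t)) (fderiv 𝕜 g p (0, 1)) p.2 :=
    hg.hasFDerivAt.comp_hasDerivAt p.2 ((hasDerivAt_const p.2 p.1).prodMk (hasDerivAt_id p.2))
  rw [(hasFDerivAt_fst.prodMk hg.hasFDerivAt).fderiv, injective_fst_prod_iff,
    hslice.unique hg']

end Graph

theorem integral_sq_add_const_sq (c z : ℝ) :
    ∫ s in (0:ℝ)..z, (s^2 + c)^2 = z^5/5 + 2*c*z^3/3 + c^2*z := by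
  have hF : ∀ x ∈ Set.uIcc 0 z,
      HasDerivAt (fun s => s^5/5 + 2*c*s^3/3 + c^2*s) ((x^2 + c)^2) x := fun x _ => by
    refine ((((hasDerivAt_pow 5 x).div_const 5).add
      (((hasDerivAt_pow 3 x).const_mul (2*c)).div_const 3)).add
        ((hasDerivAt_id' x).const_mul (c^2))).congr_deriv ?_
    norm_num
    ring
  rw [intervalIntegral.integral_eq_sub_of_hasDerivAt hF
    ((by fun_prop : Continuous fun s : ℝ => (s^2 + c)^2).intervalIntegrable _ _)]
  ring

theorem Zmap_eq_polynomial (k l : ℕ) : Zmap k l = fun q => (q.1, q.2^3 + 3*(‖q.1‖^2 - 1)*q.2,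
    q.2^5/5 + 2*(‖q.1‖^2 - 1)*q.2^3/3 + (‖q.1‖^2 - 1)^2*q.2, 0) := by
  funext q
  simp only [Zmap, add_sub_assoc, integral_sq_add_const_sq]

theorem differentiable_Zmap (k l : ℕ) : Differentiable ℝ (Zmap k l) := by
  have hnorm : Differentiable ℝ fun q : EuclideanSpace ℝ (Fin k) × ℝ => ‖q.1‖^2 :=
    ((contDiff_norm_sq ℝ (n := 1)).differentiable one_ne_zero).comp differentiable_fst
  rw [Zmap_eq_polynomial]
  fun_prop

theorem hasDerivAt_Zmap_snd (k l : ℕ) (y : EuclideanSpace ℝ (Fin k)) (z : ℝ) :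
    HasDerivAt (fun t => (Zmap k l (y, t)).2)
      (3 * (z^2 + ‖y‖^2 - 1), (z^2 + ‖y‖^2 - 1)^2, 0) z := by
  have hintegral : HasDerivAt (fun t => ∫ s in (0:ℝ)..t, (s^2 + ‖y‖^2 - 1)^2)
      ((z^2 + ‖y‖^2 - 1)^2) z :=
    (Continuous.integral_hasStrictDerivAt (by fun_prop) 0 z).hasDerivAt
  have hcubic : HasDerivAt (fun t => t^3 + 3*(‖y‖^2 - 1)*t) (3 * (z^2 + ‖y‖^2 - 1)) z := by
    refine ((hasDerivAt_pow 3 z).add ((hasDerivAt_id' z).const_mul _)).congr_deriv ?_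
    norm_num
    ring
  exact hcubic.prodMk (hintegral.prodMk (hasDerivAt_const z 0))

theorem Zmap_fderiv_injective_iff_general (n m : ℕ)
    (p : EuclideanSpace ℝ (Fin (n - 1)) × ℝ) :
    Function.Injective ⇑(fderiv ℝ (Zmap (n - 1) (m - n - 1)) p) ↔
      ‖p.1‖^2 + p.2^2 ≠ 1 := by
  have hgraph := injective_fderiv_graph_iff (g := fun q => (Zmap (n - 1) (m - n - 1) q).2)
    (differentiable_Zmap _ _ p).snd (hasDerivAt_Zmap_snd _ _ p.1 p.2)
  refine hgraph.trans ?_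
  rw [Ne, Prod.mk_eq_zero, Prod.mk_eq_zero, mul_eq_zero, pow_eq_zero_iff two_ne_zero]
  simp only [three_ne_zero, false_or, and_self, and_true]
  constructor <;> intro h h' <;> apply h <;> linarith

/-- The derivative of `Z(n,m)` at `(y,z)` is injective iff `|y|² + z² ≠ 1`:
the singular set of `Z(n,m)` is exactly the unit sphere `S^{n−1} ⊂ ℝⁿ`. -/
theorem Zmap_fderiv_injective_iff (n m : ℕ) (hn : 1 ≤ n) (hnm : n < m)
    (p : EuclideanSpace ℝ (Fin (n - 1)) × ℝ) :
    Function.Injective ⇑(fderiv ℝ (Zmap (n - 1) (m - n - 1)) p) ↔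
      ‖p.1‖^2 + p.2^2 ≠ 1 :=
  Zmap_fderiv_injective_iff_general n m p
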